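/- arXiv:1405.3069 — 2 statements merged into one kernel-verified Lean document; each statement's English description precedes it below -/
import Mathlib

section
/- Let G = (Ξ, Σ, Δ) be a grammar, X ∈ Ξ a nonterminal, k > 0, and w ∈ Σ*. Then there exists a k-index step sequence deriving w from X if and only if there exists a k-index depth-first step sequence deriving w from X. -/
namespace Paper

/-- A word over nonterminals `N` and terminals `T`. -/
abbrev Word (N T : Type) := List (N ⊕ T)

/-- A production of a grammar. -/
abbrev CProd (N T : Type) := N × Word N T

/-- A grammar, given by its set of productions. -/
structure CFG (N T : Type) where
  prods : Set (CProd N T)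

variable {N T : Type}

/-- number of occurrences of nonterminals in a word -/
def ntCount (u : Word N T) : ℕ := (u.filter (fun s => s.isLeft)).length

/-- number of occurrences of terminals in a word -/
def tCount (u : Word N T) : ℕ := (u.filter (fun s => s.isRight)).length

/-- the result of applying production `p` at position `j` of `u` -/
def applyProd (p : CProd N T) (j : ℕ) (u : Word N T) : Word N T :=
  u.take j ++ p.2 ++ u.drop (j + 1)

/-- `KSeq G k u γjs v`: a step sequence from `u` to `v` applying the indicated
productions at the indicated positions, in which every word (including `u`, `v`)
has at most `k` occurrences of nonterminals (`k = ⊤` places no restriction). -/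
inductive KSeq (G : CFG N T) (k : ℕ∞) : Word N T → List (CProd N T × ℕ) → Word N T → Prop
  | refl (u : Word N T) : (ntCount u : ℕ∞) ≤ k → KSeq G k u [] u
  | step {u v : Word N T} {p : CProd N T} {j : ℕ} {rest : List (CProd N T × ℕ)} :
      (ntCount u : ℕ∞) ≤ k → p ∈ G.prods → u[j]? = some (Sum.inl p.1) →
      KSeq G k (applyProd p j u) rest v → KSeq G k u ((p, j) :: rest) v

/-- words annotated with the index of the step at which each symbol occurrence appeared -/
abbrev AWord (N T : Type) := List ((N ⊕ T) × ℕ)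

def strip (u : AWord N T) : Word N T := u.map Prod.fst

def ntCountA (u : AWord N T) : ℕ := (u.filter (fun s => s.1.isLeft)).length

def applyProdA (p : CProd N T) (j m : ℕ) (u : AWord N T) : AWord N T :=
  u.take j ++ p.2.map (fun s => (s, m)) ++ u.drop (j + 1)

/-- the depth-first condition: position `j` carries a maximal first-appearance
index among the nonterminal occurrences of `u` -/
def dfOK (u : AWord N T) (j : ℕ) : Prop :=
  ∀ i x o, u[(i : ℕ)]? = some (Sum.inl x, o) → ∀ s oj, u[j]? = some (s, oj) → o ≤ oj

/-- `DFSeq G k m u γjs v`: a `k`-index depth-first step sequence on annotated words,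
where `m` is the index (in the whole sequence) of the current word `u`. -/
inductive DFSeq (G : CFG N T) (k : ℕ∞) : ℕ → AWord N T → List (CProd N T × ℕ) → AWord N T → Prop
  | refl (m : ℕ) (u : AWord N T) : (ntCountA u : ℕ∞) ≤ k → DFSeq G k m u [] u
  | step {m : ℕ} {u v : AWord N T} {p : CProd N T} {j o : ℕ} {rest : List (CProd N T × ℕ)} :
      (ntCountA u : ℕ∞) ≤ k → p ∈ G.prods → u[j]? = some (Sum.inl p.1, o) →
      dfOK u j →
      DFSeq G k (m + 1) (applyProdA p j (m + 1) u) rest v →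
      DFSeq G k m u ((p, j) :: rest) v

/-- `u ⇒^γ v` by a `k`-index step sequence (positions existentially quantified). -/
def CtrlSeq (G : CFG N T) (k : ℕ∞) (u : Word N T) (γ : List (CProd N T)) (v : Word N T) : Prop :=
  ∃ js : List ℕ, js.length = γ.length ∧ KSeq G k u (γ.zip js) v

/-- annotate a word as an initial word of a step sequence -/
def annot (u : Word N T) : AWord N T := u.map (fun s => (s, 0))

/-- `u ⇒^γ v` by a `k`-index depth-first step sequence starting at `u`. -/
def DFCtrlFrom (G : CFG N T) (k : ℕ∞) (u : Word N T) (γ : List (CProd N T)) (v : Word N T) :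
    Prop :=
  ∃ (js : List ℕ) (va : AWord N T),
    js.length = γ.length ∧ DFSeq G k 0 (annot u) (γ.zip js) va ∧ strip va = v

/-- embedding of terminal words -/
def tw (w : List T) : Word N T := w.map Sum.inr

/-- the sentential word `u Y v` where `u, v` are terminal and `Y` is an optional nonterminal -/
def sent (u : List T) (Y : Option N) (v : List T) : Word N T :=
  tw u ++ (Y.elim [] (fun y => [Sum.inl y])) ++ tw v

/-- `L^{(k)}_{X,Y}(G) = { u·v | X ⇒* u Y v by a k-index step sequence }`;
`Y = none` stands for `ε`. -/
def LKY (G : CFG N T) (k : ℕ∞) (X : N) (Y : Option N) : Set (List T) :=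
  {w | ∃ u v γ, w = u ++ v ∧ CtrlSeq G k [Sum.inl X] γ (sent u Y v)}

/-- `L_X(G)` -/
def Lang (G : CFG N T) (X : N) : Set (List T) := LKY G ⊤ X none

/-- `L^{(k)}_X(G)` -/
def LangK (G : CFG N T) (k : ℕ) (X : N) : Set (List T) := LKY G (k : ℕ∞) X none

/-- `Γ^{df(k)}_{X,Y}(G)`: control words of `k`-index depth-first step sequences `X ⇒^γ u Y v`. -/
def GammaDF (G : CFG N T) (k : ℕ) (X : N) (Y : Option N) : Set (List (CProd N T)) :=
  {γ | ∃ u v : List T, DFCtrlFrom G (k : ℕ∞) [Sum.inl X] γ (sent u Y v)}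

/-- `L̂_{X,Y}(Γ, G)` -/
def LHat (G : CFG N T) (Γ : Set (List (CProd N T))) (X : N) (Y : Option N) : Set (List T) :=
  {w | ∃ u v, w = u ++ v ∧ ∃ γ ∈ Γ, CtrlSeq G ⊤ [Sum.inl X] γ (sent u Y v)}

/-- the language of the bounded expression `w₁* ⋯ w_d*` -/
def BLang {α : Type} : List (List α) → Set (List α)
  | [] => {[]}
  | w :: ws => {u | ∃ (n : ℕ) (v : List α), v ∈ BLang ws ∧ u = (List.replicate n w).flatten ++ v}

/-- the words of a bounded expression must be nonempty -/
def IsBExpr {α : Type} (ws : List (List α)) : Prop := ∀ w ∈ ws, w ≠ []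

/-- the language of the letter-bounded expression `a₁* ⋯ a_d*` -/
def letterLang {α : Type} (as : List α) : Set (List α) := BLang (as.map (fun a => [a]))

/-- the language `a_i* ⋯ a_j*` (0-indexed segment of `as` from `i` to `j` inclusive) -/
def segLang {α : Type} (as : List α) (i j : ℕ) : Set (List α) :=
  letterLang ((as.drop i).take (j - i + 1))

end Paper

namespace Paper

variable {N T : Type}

/-- ranked words over the nonterminals -/
abbrev RW (N : Type) := List (N × ℕ)

/-- the set of rank values is downward closed (equivalently, of the form `{0, …, m}`
when nonempty) -/
def contiguousRanks (q : RW N) : Prop := ∀ p ∈ q, ∀ j ≤ p.2, ∃ x : N, (x, j) ∈ q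

/-- vertices of the graph `A^{df(k)}_G` -/
def IsVertex (k : ℕ) (q : RW N) : Prop :=
  q.length ≤ k ∧ contiguousRanks q ∧ List.Pairwise (· ≤ ·) (q.map Prod.snd)

/-- `w↓Ξ` : projection of a word to its nonterminals -/
def ntProj (w : Word N T) : List N := w.filterMap Sum.getLeft?

open Classical in
/-- the rank given to the nonterminals produced by a step rewriting a nonterminal
of maximal rank `i`, where `uv` is the rest of the ranked word -/
noncomputable def newRank (uv : RW N) (i : ℕ) : ℕ :=
  if uv = [] then 0 else if ∀ p ∈ uv, p.2 ≠ i then i else i + 1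

/-- the edge relation of the graph `A^{df(k)}_G` -/
def Edge (G : CFG N T) (k : ℕ) (q : RW N) (p : CProd N T) (q' : RW N) : Prop :=
  p ∈ G.prods ∧ IsVertex k q ∧ IsVertex k q' ∧
  ∃ (u v : RW N) (i : ℕ), q = u ++ [(p.1, i)] ++ v ∧ (∀ x ∈ q, x.2 ≤ i) ∧
    q' = u ++ v ++ (ntProj p.2).map (fun X => (X, newRank (u ++ v) i))

/-- paths in a labeled graph, recording the sequence of edge labels -/
inductive GPath {V E : Type} (edge : V → E → V → Prop) : V → List E → V → Prop
  | refl (v : V) : GPath edge v [] v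
  | step {v v' v'' : V} {e : E} {es : List E} :
      edge v e v' → GPath edge v' es v'' → GPath edge v (e :: es) v''

/-- paths recording the successive vertices as well -/
inductive VPath {V E : Type} (edge : V → E → V → Prop) : V → List (E × V) → Prop
  | refl (v : V) : VPath edge v []
  | step {v v' : V} {e : E} {rest : List (E × V)} :
      edge v e v' → VPath edge v' rest → VPath edge v ((e, v') :: rest)

/-- endpoint of a path starting at `q` -/
def pend {V E : Type} (q : V) (π : List (E × V)) : V := (π.map Prod.snd).getLastD q

/-- a path is acyclic iff it visits no vertex twice -/
def AcyclicFrom {V E : Type} (q : V) (π : List (E × V)) : Prop :=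
  (q :: π.map Prod.snd).Nodup

/-- `Decomp edge q pairs fin` asserts that the path obtained by concatenating, in order,
the segments of `pairs` (each an acyclic segment followed by a cycle) and `fin` is a valid
path from `q`, alternating acyclic segments `ς_j` and cycles `θ_j`. -/
def Decomp {V E : Type} (edge : V → E → V → Prop) :
    V → List (List (E × V) × List (E × V)) → List (E × V) → Prop
  | q, [], fin => VPath edge q fin ∧ AcyclicFrom q fin
  | q, (σ, θ) :: rest, fin =>
      VPath edge q σ ∧ AcyclicFrom q σ ∧
      VPath edge (pend q σ) θ ∧ pend (pend q σ) θ = pend q σ ∧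
      Decomp edge (pend q σ) rest fin

/-- `|γ|_a`: total number of occurrences of the terminal `a` in the right-hand
sides of the productions of the control word `γ` -/
def projCnt {A : Type} [DecidableEq A] (γ : List (CProd N A)) (a : A) : ℕ :=
  ((γ.map (fun p => p.2)).flatten.filterMap Sum.getRight?).count a

/-- `proj(γ) = a₁^{|γ|_{a₁}} ⋯ a_s^{|γ|_{a_s}}` -/
def projW {A : Type} [DecidableEq A] (as : List A) (γ : List (CProd N A)) : List A :=
  (as.map (fun a => List.replicate (projCnt γ a) a)).flatten

end Paper

namespace Paper

variable {N T : Type}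

/-- a grammar is in 2-normal form -/
def TwoNF (G : CFG N T) : Prop := ∀ p ∈ G.prods, p.2.length ≤ 2

/-- states of the automaton/grammar `G^b`: `(s, i)` encodes `q^{(s+1)}_{i+1}`,
i.e. position `i` (0-indexed) inside the block `s` (0-indexed) -/
abbrev QB : Type := ℕ × ℕ

/-- `ℓ_s`: length of the `s`-th word of the bounded expression -/
def lenB (ws : List (List T)) (s : ℕ) : ℕ := (ws.getD s []).length

/-- the `i`-th letter of the `s`-th word -/
def letterB (ws : List (List T)) (s i : ℕ) : Option T := (ws.getD s [])[i]?

/-- the productions of the grammar `G^b` generating the bounded expression `b` -/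
def DeltaB (ws : List (List T)) : Set (CProd QB T) :=
  {p | (∃ s i a, s < ws.length ∧ i + 1 < lenB ws s ∧ letterB ws s i = some a ∧
          p = ((s, i), [Sum.inr a, Sum.inl (s, i + 1)]))
     ∨ (∃ s s' a, s ≤ s' ∧ s' < ws.length ∧
          letterB ws s (lenB ws s - 1) = some a ∧
          p = ((s, lenB ws s - 1), [Sum.inr a, Sum.inl (s', 0)]))
     ∨ (∃ s, s < ws.length ∧ p = ((s, 0), ([] : Word QB T)))}

/-- the grammar `G^b` -/
def GB (ws : List (List T)) : CFG QB T := ⟨DeltaB ws⟩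

/-- nonterminals `[q X q']` of the product grammar `G^∩` -/
abbrev NI (N : Type) : Type := QB × N × QB

/-- `q ∈ Ξ^b` -/
def ValidQ (ws : List (List T)) (q : QB) : Prop :=
  q.1 < ws.length ∧ q.2 < lenB ws q.1

/-- `[q X q'] ∈ Ξ^∩`: both states valid and blocks in order -/
def ValidNI (ws : List (List T)) (n : NI N) : Prop :=
  ValidQ ws n.1 ∧ ValidQ ws n.2.2 ∧ n.1.1 ≤ n.2.2.1

/-- `q ⇒* w·q'` in `G^b` -/
def DerB (ws : List (List T)) (q : QB) (w : List T) (q' : QB) : Prop :=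
  ∃ γ, CtrlSeq (GB ws) ⊤ [Sum.inl q] γ (tw w ++ [Sum.inl q'])

/-- the productions `Δ^∩` of the product grammar `G^∩` -/
def DeltaI (G : CFG N T) (ws : List (List T)) : Set (CProd (NI N) T) :=
  {pp | ∃ (q q' : QB) (X : N), ValidNI ws (q, X, q') ∧
     ((∃ w : List T, (X, tw w) ∈ G.prods ∧ DerB ws q w q' ∧
         pp = ((q, X, q'), tw w)) ∨
      (∃ Y : N, (X, [Sum.inl Y]) ∈ G.prods ∧
         pp = ((q, X, q'), [Sum.inl ((q, Y, q') : NI N)])) ∨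
      (∃ (a : T) (Y : N) (qm : QB), (X, [Sum.inr a, Sum.inl Y]) ∈ G.prods ∧
         ((q, [Sum.inr a, Sum.inl qm]) : CProd QB T) ∈ DeltaB ws ∧ ValidNI ws (qm, Y, q') ∧
         pp = ((q, X, q'), [Sum.inr a, Sum.inl ((qm, Y, q') : NI N)])) ∨
      (∃ (a : T) (Y : N) (qm : QB), (X, [Sum.inl Y, Sum.inr a]) ∈ G.prods ∧
         ((qm, [Sum.inr a, Sum.inl q']) : CProd QB T) ∈ DeltaB ws ∧ ValidNI ws (q, Y, qm) ∧
         pp = ((q, X, q'), [Sum.inl ((q, Y, qm) : NI N), Sum.inr a])) ∨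
      (∃ (Y Z : N) (qm : QB), (X, [Sum.inl Y, Sum.inl Z]) ∈ G.prods ∧
         ValidNI ws (q, Y, qm) ∧ ValidNI ws (qm, Z, q') ∧
         pp = ((q, X, q'), [Sum.inl ((q, Y, qm) : NI N), Sum.inl ((qm, Z, q') : NI N)])))}

/-- the product grammar `G^∩` -/
def GI (G : CFG N T) (ws : List (List T)) : CFG (NI N) T := ⟨DeltaI G ws⟩

/-- `ζ` on symbols -/
def zetaS : (NI N ⊕ T) → (N ⊕ T) := Sum.map (fun n => n.2.1) id

/-- `ζ` on productions -/
def zetaP (p : CProd (NI N) T) : CProd N T := (p.1.2.1, p.2.map zetaS)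

/-- `ζ` on control words -/
def zetaC (γ : List (CProd (NI N) T)) : List (CProd N T) := γ.map zetaP

/-- the intermediate state of the (unique, shortest) two-step run of `G^b` from the
left state of `h` to its right state; when the first step wraps, the least possible
intermediate block is chosen -/
noncomputable def iotaMid (ws : List (List T)) (h : NI N) (a b : T) : QB :=
  if h.1.2 + 1 < lenB ws h.1.1 then (h.1.1, h.1.2 + 1)
  else (sInf {y : ℕ | (((h.1.1, h.1.2), [Sum.inr a, Sum.inl ((y, 0) : QB)]) : CProd QB T) ∈ DeltaB ws ∧
                (((y, 0), [Sum.inr b, Sum.inl (h.2.2 : QB)]) : CProd QB T) ∈ DeltaB ws}, 0)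

/-- `ι` on right-hand sides: relabels terminals by the indices (0-indexed) of the
blocks of `b` completed by the corresponding moves of `G^b`; `h` is the head of the
production -/
noncomputable def iotaRhs (ws : List (List T)) (h : NI N) :
    Word (NI N) T → Word (NI N) ℕ
  | [] => []
  | [Sum.inr _] => if h.2.2.2 = 0 then [Sum.inr h.1.1] else []
  | [Sum.inr a, Sum.inr b] =>
      (if (iotaMid ws h a b).2 = 0 then [Sum.inr h.1.1] else []) ++
      (if h.2.2.2 = 0 then [Sum.inr (iotaMid ws h a b).1] else [])
  | [Sum.inr _, Sum.inl m] => (if m.1.2 = 0 then [Sum.inr h.1.1] else []) ++ [Sum.inl m]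
  | [Sum.inl m, Sum.inr _] => [Sum.inl m] ++ (if h.2.2.2 = 0 then [Sum.inr m.2.2.1] else [])
  | other => other.map (Sum.map id (fun _ => 0))

/-- the map `ι : Δ^∩ → Δ^⋈` -/
noncomputable def iota (ws : List (List T)) (p : CProd (NI N) T) : CProd (NI N) ℕ :=
  (p.1, iotaRhs ws p.1 p.2)

/-- the grammar `G^⋈`, whose terminals are the (0-indexed) letters `a₁, …, a_d`
represented by natural numbers -/
noncomputable def GBow (G : CFG N T) (ws : List (List T)) : CFG (NI N) ℕ :=
  ⟨iota ws '' DeltaI G ws⟩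

end Paper

namespace Paper

variable {N A : Type}

/-- `Ξ̂`: nonterminals producing some word starting with `a₁` and some word ending
with `a_d` -/
def XiHat (G : CFG N A) (a1 ad : A) : Set N :=
  {Y | (∃ w ∈ Lang G Y, ∃ v, w = a1 :: v) ∧ (∃ w ∈ Lang G Y, ∃ v, w = v ++ [ad])}

/-- the grammar `G^♯` (here `S = Ξ̂`, and `Ξ̌` is its complement) -/
def GSharp (G : CFG N A) (S : Set N) : CFG N A :=
  ⟨{p | p ∈ G.prods ∧ p.1 ∉ S} ∪
   {p | p ∈ G.prods ∧ p.1 ∈ S ∧ ∃ (u : Word N A) (Xr : N) (v : Word N A),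
      Xr ∈ S ∧ p.2 = u ++ [Sum.inl Xr] ++ v}⟩

/-- the grammar `G_{i,w}` for a pivot production `piv` (here `S = Ξ̂`) -/
def GPivot (G : CFG N A) (S : Set N) (piv : CProd N A) : CFG N A :=
  ⟨{p | p ∈ G.prods ∧ p.1 ∉ S} ∪ {piv}⟩

/-- `G` is reduced for `X` -/
def Reduced (G : CFG N A) (X : N) : Prop :=
  ∀ Y : N, Y ≠ X → (LKY G ⊤ X (some Y)).Nonempty ∧ (Lang G Y).Nonempty

/-- `a₁* ⋯ a_d*` (given by the list `as`) is the minimal strict letter-bounded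
expression for `L_X(G)` -/
def MinimalLB (G : CFG N A) (X : N) (as : List A) : Prop :=
  Lang G X ⊆ letterLang as ∧ ∀ i < as.length, ¬ (Lang G X ⊆ letterLang (as.eraseIdx i))

/-- a symbol of `A ∪ {ε}` as a word -/
def optT (a : Option A) : Word N A := a.elim [] (fun x => [Sum.inr x])

/-- a symbol of `Ξ ∪ {ε}` as a word -/
def optN (y : Option N) : Word N A := y.elim [] (fun x => [Sum.inl x])

/-- `y ⇒^γ u_y` is a (possibly empty) `k`-index depth-first derivation, where
`y ∈ Ξ ∪ {ε}`; for `y = ε` the derivation is empty -/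
def optDFDer (H : CFG N A) (k : ℕ) (y : Option N) (γ : List (CProd N A)) : Prop :=
  match y with
  | some Y => ∃ w : List A, DFCtrlFrom H (k : ℕ∞) [Sum.inl Y] γ (tw w)
  | none => γ = []

/-- the grammar `G_k` with productions `X_i → X_{i-1} X_{i-1}` (1 ≤ i ≤ k) and `X_0 → a` -/
def Gk (k : ℕ) : CFG ℕ Unit :=
  ⟨{p | (∃ i, 1 ≤ i ∧ i ≤ k ∧ p = (i, [Sum.inl (i - 1), Sum.inl (i - 1)])) ∨
        p = (0, [Sum.inr ()])}⟩

end Paper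

/-!
Luker's argument. Take a `k`-index derivation of a terminal word from a sentential form `u` with
`r` occurrences of nonterminals, and among the subderivations of these occurrences the one that
becomes terminal first. Until that moment each of the other `r - 1` occurrences still has a
nonterminal descendant, so this subderivation, run on its own, has index at most `k - (r - 1)`:
performed first, next to the untouched other occurrences, it stays `k`-index, and the remaining
steps still form a `k`-index derivation. By induction on the length, both pieces can be made
depth-first: the subderivation after its first step, whose new nonterminals are the youngest, and
the remainder, in which all nonterminals carry the same annotation again.
-/

namespace List

variable {α : Type*}

theorem getD_set_self {l : List α} {i : ℕ} (hi : i < l.length) {a d : α} :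
    (l.set i a).getD i d = a := by
  simp [List.getD_eq_getElem?_getD, hi]

theorem getD_set_of_ne {l : List α} {i j : ℕ} (h : i ≠ j) {a d : α} :
    (l.set i a).getD j d = l.getD j d := by
  simp [List.getD_eq_getElem?_getD, List.getElem?_set_ne h]

theorem getElem?_append_append_length_add (A w B : List α) {j : ℕ} (hj : j < w.length) :
    (A ++ w ++ B)[A.length + j]? = w[j]? := by
  rw [List.append_assoc, List.getElem?_append_right (Nat.le_add_right _ _),
    Nat.add_sub_cancel_left, List.getElem?_append_left hj]

theorem take_append_drop_succ_append_append (A w B x : List α) {j : ℕ} (hj : j < w.length) :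
    (A ++ w ++ B).take (A.length + j) ++ x ++ (A ++ w ++ B).drop (A.length + j + 1) =
      A ++ (w.take j ++ x ++ w.drop (j + 1)) ++ B := by
  rw [List.append_assoc A w B, List.take_length_add_append, Nat.add_assoc,
    List.drop_length_add_append, List.take_append_of_le_length hj.le,
    List.drop_append_of_le_length hj]
  simp

theorem flatten_set_of_lt {ws : List (List α)} {i : ℕ} (hi : i < ws.length) (a : List α) :
    (ws.set i a).flatten = (ws.take i).flatten ++ a ++ (ws.drop (i + 1)).flatten := by
  simp [List.set_eq_take_append_cons_drop, hi]

theorem flatten_eq_take_getD_drop {ws : List (List α)} {i : ℕ} (hi : i < ws.length) :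
    ws.flatten = (ws.take i).flatten ++ ws.getD i [] ++ (ws.drop (i + 1)).flatten := by
  rw [← flatten_set_of_lt hi, List.getD_eq_getElem _ _ hi, List.set_getElem_self]

theorem exists_getElem?_getD_of_getElem?_flatten {ws : List (List α)} {j : ℕ} {s : α}
    (h : ws.flatten[j]? = some s) :
    ∃ i j', j = (ws.take i).flatten.length + j' ∧ (ws.getD i [])[j']? = some s := by
  induction ws generalizing j with
  | nil => simp at h
  | cons w ws ih =>
    by_cases hj : j < w.length
    · exact ⟨0, j, by simp, by rwa [List.flatten_cons, List.getElem?_append_left hj] at h⟩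
    · rw [List.flatten_cons, List.getElem?_append_right (by omega)] at h
      obtain ⟨i, j', hj', hs⟩ := ih h
      exact ⟨i + 1, j', by
        simp only [List.take_succ_cons, List.flatten_cons, List.length_append]; omega, hs⟩

theorem countP_le_sum_map (f : α → ℕ) (l : List α) :
    l.countP (fun a => f a ≠ 0) ≤ (l.map f).sum := by
  induction l with
  | nil => simp
  | cons a l ih =>
    simp only [List.countP_cons, List.map_cons, List.sum_cons]
    split_ifs with ha <;> simp at ha <;> omega

theorem apply_getD_add_countP_sub_one_le_sum_map (f : α → ℕ) (l : List α) (i : ℕ) {d : α}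
    (hd : f d = 0) : f (l.getD i d) + (l.countP (fun a => f a ≠ 0) - 1) ≤ (l.map f).sum := by
  induction l generalizing i with
  | nil => simp [hd]
  | cons a l ih =>
    have := countP_le_sum_map f l
    cases i with
    | zero =>
      simp only [List.getD_cons_zero, List.countP_cons, List.map_cons, List.sum_cons]
      split_ifs with ha <;> simp at ha <;> omega
    | succ i =>
      have := ih i
      simp only [List.getD_cons_succ, List.countP_cons, List.map_cons, List.sum_cons]
      split_ifs with ha <;> simp at ha <;> omega

theorem countP_set_of_pos {p : α → Bool} {l : List α} {i : ℕ} (hi : i < l.length) {a : α}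
    (hl : p l[i]) (ha : p a) : (l.set i a).countP p = l.countP p := by
  have := List.countP_pos_iff.2 ⟨l[i], List.getElem_mem hi, hl⟩
  rw [List.countP_set hi, if_pos hl, if_pos ha]
  omega

end List

namespace Paper

variable {N T : Type} {G : CFG N T}

section Words

theorem ntCount_append (u v : Word N T) : ntCount (u ++ v) = ntCount u + ntCount v := by
  simp [ntCount]

theorem ntCount_cons (s : N ⊕ T) (u : Word N T) : ntCount (s :: u) = ntCount [s] + ntCount u :=
  ntCount_append [s] u

theorem ntCount_flatten (ws : List (Word N T)) : ntCount ws.flatten = (ws.map ntCount).sum := by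
  induction ws with
  | nil => rfl
  | cons w ws ih => simp [ntCount_append, ih]

theorem ntCount_eq_zero_iff {u : Word N T} : ntCount u = 0 ↔ ∀ x, Sum.inl x ∉ u := by
  simp [ntCount, List.filter_eq_nil_iff]

theorem ntCount_ne_zero_of_getElem? {u : Word N T} {j : ℕ} {x : N}
    (h : u[j]? = some (Sum.inl x)) : ntCount u ≠ 0 :=
  fun h0 => ntCount_eq_zero_iff.1 h0 x (List.mem_of_getElem? h)

theorem ntCount_tw (w : List T) : ntCount (tw w : Word N T) = 0 := by
  simp [ntCount_eq_zero_iff, tw]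

theorem ntCountA_eq_ntCount_strip (ua : AWord N T) : ntCountA ua = ntCount (strip ua) := by
  simp [ntCountA, ntCount, strip, List.filter_map, Function.comp_def]

theorem ntCountA_append (u v : AWord N T) : ntCountA (u ++ v) = ntCountA u + ntCountA v := by
  simp [ntCountA]

theorem strip_append (u v : AWord N T) : strip (u ++ v) = strip u ++ strip v :=
  List.map_append

theorem strip_applyProdA (p : CProd N T) (j m : ℕ) (ua : AWord N T) :
    strip (applyProdA p j m ua) = applyProd p j (strip ua) := by
  simp [strip, applyProdA, applyProd, List.map_take, List.map_drop, Function.comp_def]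

theorem strip_annot (u : Word N T) : strip (annot u) = u := by
  simp [strip, annot, Function.comp_def]

theorem exists_eq_append_cons_of_strip_eq {ua : AWord N T} {A B : Word N T} {Y : N} {c : ℕ}
    (hua : strip ua = A ++ Sum.inl Y :: B) (hc : ∀ x o, (Sum.inl x, o) ∈ ua → o = c) :
    ∃ L R, ua = L ++ (Sum.inl Y, c) :: R ∧ strip L = A ∧ strip R = B := by
  obtain ⟨L, YR, rfl, hL, hYR⟩ := List.map_eq_append_iff.1 hua
  obtain ⟨⟨s, o⟩, R, rfl, rfl, hR⟩ := List.map_eq_cons_iff.1 hYR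
  obtain rfl := hc Y o (by simp)
  exact ⟨L, R, rfl, hL, hR⟩

theorem applyProd_append_append (p : CProd N T) (A w B : Word N T) {j : ℕ}
    (hj : j < w.length) :
    applyProd p (A.length + j) (A ++ w ++ B) = A ++ applyProd p j w ++ B :=
  List.take_append_drop_succ_append_append A w B p.2 hj

theorem applyProdA_append_append (p : CProd N T) (m : ℕ) (A w B : AWord N T) {j : ℕ}
    (hj : j < w.length) :
    applyProdA p (A.length + j) m (A ++ w ++ B) = A ++ applyProdA p j m w ++ B :=
  List.take_append_drop_succ_append_append A w B _ hj

theorem mem_applyProdA {p : CProd N T} {j m : ℕ} {u : AWord N T} {a : (N ⊕ T) × ℕ}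
    (h : a ∈ applyProdA p j m u) : a ∈ u ∨ a.2 = m := by
  simp only [applyProdA, List.mem_append, List.mem_map] at h
  rcases h with (h | ⟨s, -, rfl⟩) | h
  · exact Or.inl (List.mem_of_mem_take h)
  · exact Or.inr rfl
  · exact Or.inl (List.mem_of_mem_drop h)

theorem dfOK_iff_forall_mem {u : AWord N T} {j : ℕ} :
    dfOK u j ↔ ∀ x o, (Sum.inl x, o) ∈ u → ∀ s oj, u[j]? = some (s, oj) → o ≤ oj := by
  simp only [dfOK, List.mem_iff_getElem?]
  exact ⟨fun h x o ⟨i, hi⟩ => h i x o hi, fun h i x o hi => h x o ⟨i, hi⟩⟩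

end Words

section Parts

variable {ws : List (Word N T)} {i j : ℕ} {s : N ⊕ T}

theorem lt_length_of_getElem?_getD (h : (ws.getD i [])[j]? = some s) :
    i < ws.length ∧ j < (ws.getD i []).length := by
  refine ⟨?_, (List.getElem?_eq_some_iff.1 h).1⟩
  by_contra hi
  rw [List.getD_eq_default _ _ (by omega)] at h
  simp at h

theorem getElem?_flatten_of_getElem?_getD (h : (ws.getD i [])[j]? = some s) :
    ws.flatten[(ws.take i).flatten.length + j]? = some s := by
  obtain ⟨hi, hj⟩ := lt_length_of_getElem?_getD h
  rw [List.flatten_eq_take_getD_drop hi, List.getElem?_append_append_length_add _ _ _ hj, h]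

theorem applyProd_flatten_of_getElem?_getD (p : CProd N T) (h : (ws.getD i [])[j]? = some s) :
    applyProd p ((ws.take i).flatten.length + j) ws.flatten =
      (ws.set i (applyProd p j (ws.getD i []))).flatten := by
  obtain ⟨hi, hj⟩ := lt_length_of_getElem?_getD h
  rw [List.flatten_eq_take_getD_drop hi, applyProd_append_append _ _ _ _ hj,
    List.flatten_set_of_lt hi]

theorem ntCount_flatten_set_le {w : Word N T} (hw : ntCount w = 0) :
    ntCount (ws.set i w).flatten ≤ ntCount ws.flatten := by
  by_cases hi : i < ws.length
  · rw [List.flatten_set_of_lt hi, List.flatten_eq_take_getD_drop hi]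
    simp only [ntCount_append, hw]
    omega
  · rw [List.set_eq_take_append_cons_drop, if_neg hi]

end Parts

def liveCount (ws : List (Word N T)) : ℕ := ws.countP (fun w => ntCount w ≠ 0)

theorem ntCount_getD_add_liveCount_sub_one_le (ws : List (Word N T)) (i : ℕ) :
    ntCount (ws.getD i []) + (liveCount ws - 1) ≤ ntCount ws.flatten := by
  rw [ntCount_flatten]
  exact List.apply_getD_add_countP_sub_one_le_sum_map ntCount ws i rfl

theorem liveCount_set {ws : List (Word N T)} {i : ℕ} {w : Word N T}
    (hi : ntCount (ws.getD i []) ≠ 0) (hw : ntCount w ≠ 0) :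
    liveCount (ws.set i w) = liveCount ws := by
  have hlt : i < ws.length := by
    by_contra h
    rw [List.getD_eq_default _ _ (by omega)] at hi
    exact hi rfl
  rw [List.getD_eq_getElem _ _ hlt] at hi
  exact List.countP_set_of_pos hlt (by simpa using hi) (by simpa using hw)

theorem liveCount_map_singleton (u : Word N T) : liveCount (u.map fun s => [s]) = ntCount u := by
  rw [liveCount, List.countP_map, ntCount, ← List.countP_eq_length_filter]
  congr 1
  funext s
  cases s <;> rfl

section KSeq

variable {k : ℕ∞} {u v : Word N T} {l : List (CProd N T × ℕ)}

theorem KSeq.ntCount_le (h : KSeq G k u l v) : (ntCount u : ℕ∞) ≤ k := by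
  cases h <;> assumption

theorem KSeq.eq_of_ntCount_eq_zero (h : KSeq G k u l v) (hu : ntCount u = 0) : v = u := by
  cases h with
  | refl => rfl
  | step _ _ hj => exact absurd hu (ntCount_ne_zero_of_getElem? hj)

theorem KSeq.exists_cons_of_singleton {Y : N} (h : KSeq G k [Sum.inl Y] l v)
    (hv : ntCount v = 0) :
    ∃ p l', l = (p, 0) :: l' ∧ p ∈ G.prods ∧ p.1 = Y ∧ KSeq G k p.2 l' v := by
  cases h with
  | refl => exact absurd hv (by simp [ntCount])
  | @step _ _ p j l' _ hp hj htail =>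
    cases j with
    | succ j => simp at hj
    | zero =>
      simp only [List.getElem?_cons_zero, Option.some.injEq, Sum.inl.injEq] at hj
      exact ⟨p, l', rfl, hp, hj.symm, by simpa [applyProd] using htail⟩

theorem KSeq.cons_of_flatten_set {ws : List (Word N T)} {i j : ℕ} {p : CProd N T}
    (hb : (ntCount ws.flatten : ℕ∞) ≤ k) (hp : p ∈ G.prods)
    (hj : (ws.getD i [])[j]? = some (Sum.inl p.1))
    (h : KSeq G k (ws.set i (applyProd p j (ws.getD i []))).flatten l v) :
    KSeq G k ws.flatten ((p, (ws.take i).flatten.length + j) :: l) v :=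
  KSeq.step hb hp (getElem?_flatten_of_getElem?_getD hj)
    (by rwa [applyProd_flatten_of_getElem?_getD p hj])

/-- Stated for an arbitrary splitting `ws` of `u` into parts, so that it survives the induction
along the step sequence; the part `i` chosen is the first to become terminal. -/
theorem KSeq.exists_first_finished_part (h : KSeq G k u l v) (hv : ntCount v = 0)
    (ws : List (Word N T)) (hws : ws.flatten = u) (hu : ntCount u ≠ 0) :
    ∃ i l₁ w l₂, ntCount (ws.getD i []) ≠ 0 ∧ ntCount w = 0 ∧
      KSeq G (k - (liveCount ws - 1 : ℕ)) (ws.getD i []) l₁ w ∧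
      KSeq G k (ws.set i w).flatten l₂ v ∧ l₁.length + l₂.length = l.length := by
  induction h generalizing ws with
  | refl => exact absurd hv hu
  | @step u v p j rest hb hp hj htail ih =>
    subst hws
    obtain ⟨i₀, j₀, rfl, hj₀⟩ := List.exists_getElem?_getD_of_getElem?_flatten hj
    have hi₀ : i₀ < ws.length := (lt_length_of_getElem?_getD hj₀).1
    have hlive₀ : ntCount (ws.getD i₀ []) ≠ 0 := ntCount_ne_zero_of_getElem? hj₀
    set a := applyProd p j₀ (ws.getD i₀ [])
    have hflat : _ = (ws.set i₀ a).flatten := applyProd_flatten_of_getElem?_getD p hj₀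
    have hbound₀ : (ntCount (ws.getD i₀ []) : ℕ∞) ≤ k - (liveCount ws - 1 : ℕ) := by
      refine ENat.le_sub_of_add_le_right (ENat.natCast_ne_top _) (le_trans ?_ hb)
      exact_mod_cast ntCount_getD_add_liveCount_sub_one_le ws i₀
    by_cases hfin : ntCount a = 0
    · exact ⟨i₀, [(p, j₀)], a, rest, hlive₀, hfin,
        KSeq.step hbound₀ hp hj₀ (KSeq.refl a (by simp [hfin])), by rwa [← hflat],
        by simp [Nat.add_comm]⟩
    have hu' : ntCount (ws.set i₀ a).flatten ≠ 0 := by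
      rw [List.flatten_set_of_lt hi₀]
      simp only [ntCount_append]
      omega
    obtain ⟨i, l₁, w, l₂, hi, hw, h₁, h₂, hlen⟩ := ih hv (ws.set i₀ a) hflat.symm (hflat ▸ hu')
    rw [liveCount_set hlive₀ hfin] at h₁
    by_cases hii : i = i₀
    · subst hii
      rw [List.getD_set_self hi₀] at h₁
      rw [List.set_set] at h₂
      exact ⟨i, (p, j₀) :: l₁, w, l₂, hlive₀, hw, KSeq.step hbound₀ hp hj₀ h₁, h₂,
        by simp only [List.length_cons]; omega⟩
    · rw [List.getD_set_of_ne (Ne.symm hii)] at hi h₁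
      rw [List.set_comm a w (Ne.symm hii)] at h₂
      refine ⟨i, l₁, w, _, hi, hw, h₁,
        KSeq.cons_of_flatten_set ((Nat.cast_le.2 (ntCount_flatten_set_le hw)).trans hb) hp
          (by rwa [List.getD_set_of_ne hii]) (by rwa [List.getD_set_of_ne hii]),
        by simp only [List.length_cons]; omega⟩

theorem KSeq.exists_first_finished_nonterminal (h : KSeq G k u l v) (hv : ntCount v = 0)
    (hu : ntCount u ≠ 0) :
    ∃ A Y B l₁ w l₂, u = A ++ Sum.inl Y :: B ∧ ntCount w = 0 ∧
      KSeq G (k - (ntCount u - 1 : ℕ)) [Sum.inl Y] l₁ w ∧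
      KSeq G k (A ++ w ++ B) l₂ v ∧ l₁.length + l₂.length = l.length := by
  have hflat : (u.map fun s => [s]).flatten = u := by simp [← List.flatMap_def]
  obtain ⟨i, l₁, w, l₂, hi, hw, h₁, h₂, hlen⟩ :=
    h.exists_first_finished_part hv (u.map fun s => [s]) hflat hu
  have hlt : i < u.length := by
    by_contra hge
    rw [List.getD_eq_default _ _ (by simpa using hge)] at hi
    exact hi rfl
  rw [List.getD_eq_getElem _ _ (by simpa using hlt), List.getElem_map] at hi h₁
  rw [liveCount_map_singleton] at h₁
  obtain ⟨Y, hY⟩ : ∃ Y, u[i] = Sum.inl Y := by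
    cases hs : u[i] with
    | inl Y => exact ⟨Y, rfl⟩
    | inr a => simp [hs, ntCount] at hi
  rw [hY] at h₁
  refine ⟨u.take i, Y, u.drop (i + 1), l₁, w, l₂, ?_, hw, h₁, ?_, hlen⟩
  · rw [← hY, List.getElem_cons_drop, List.take_append_drop]
  · rwa [List.flatten_set_of_lt (by simpa using hlt), ← List.map_take, ← List.map_drop,
      ← List.flatMap_def, ← List.flatMap_def, List.flatMap_singleton',
      List.flatMap_singleton'] at h₂

end KSeq

section DFSeq

variable {k : ℕ∞} {m : ℕ} {l : List (CProd N T × ℕ)}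

theorem DFSeq.toKSeq {ua va : AWord N T} (h : DFSeq G k m ua l va) :
    KSeq G k (strip ua) l (strip va) := by
  induction h with
  | refl m u hu => exact KSeq.refl _ (by rwa [← ntCountA_eq_ntCount_strip])
  | step hu hp hj _ _ ih =>
    refine KSeq.step (by rwa [← ntCountA_eq_ntCount_strip]) hp ?_
      (by rwa [strip_applyProdA] at ih)
    simp [strip, hj]

theorem DFSeq.append {ua wa va : AWord N T} {l₂} (h₁ : DFSeq G k m ua l wa)
    (h₂ : DFSeq G k (m + l.length) wa l₂ va) : DFSeq G k m ua (l ++ l₂) va := by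
  induction h₁ with
  | refl => simpa using h₂
  | step hu hp hj hdf _ ih =>
    refine DFSeq.step hu hp hj hdf (ih ?_)
    simpa [Nat.add_assoc, Nat.add_comm 1] using h₂

theorem DFSeq.cons_singleton {c : ℕ} {p : CProd N T} {va : AWord N T} (hp : p ∈ G.prods)
    (hk : 1 ≤ k) (h : DFSeq G k (m + 1) (p.2.map fun s => (s, m + 1)) l va) :
    DFSeq G k m [(Sum.inl p.1, c)] ((p, 0) :: l) va := by
  refine DFSeq.step (by simpa [ntCountA, List.filter_cons] using hk) hp rfl ?_
    (by simpa [applyProdA] using h)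
  intro i x o hi s oj hj
  cases i with
  | succ i => simp at hi
  | zero =>
    simp only [List.getElem?_cons_zero, Option.some.injEq, Prod.mk.injEq] at hi hj
    omega

theorem DFSeq.frame {k' : ℕ∞} {b : ℕ} {w va : AWord N T} (h : DFSeq G k' m w l va)
    (L R : AWord N T) (hk : k' + ntCountA (L ++ R) ≤ k)
    (hLR : ∀ x o, (Sum.inl x, o) ∈ L ++ R → o ≤ b) (hw : ∀ x o, (Sum.inl x, o) ∈ w → b ≤ o)
    (hb : b ≤ m) :
    DFSeq G k m (L ++ w ++ R) (l.map fun q => (q.1, L.length + q.2)) (L ++ va ++ R) := by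
  have hcount (u : AWord N T) (hu : (ntCountA u : ℕ∞) ≤ k') :
      (ntCountA (L ++ u ++ R) : ℕ∞) ≤ k :=
    calc (ntCountA (L ++ u ++ R) : ℕ∞) = ntCountA u + ntCountA (L ++ R) := by
          simp only [ntCountA_append]; push_cast; ring
      _ ≤ k' + ntCountA (L ++ R) := by gcongr
      _ ≤ k := hk
  induction h with
  | refl m u hu => exact DFSeq.refl _ _ (hcount u hu)
  | @step m u v p j o rest hu hp hj hdf _ ih =>
    have hjlt : j < u.length := (List.getElem?_eq_some_iff.1 hj).1
    have hj' : (L ++ u ++ R)[L.length + j]? = some (Sum.inl p.1, o) := by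
      rw [List.getElem?_append_append_length_add _ _ _ hjlt, hj]
    have hdf' : dfOK (L ++ u ++ R) (L.length + j) := by
      rw [dfOK_iff_forall_mem, hj']
      rintro x o' hx s oj ⟨-, rfl⟩
      rcases List.mem_append.1 hx with hx | hx
      · rcases List.mem_append.1 hx with hx | hx
        · exact (hLR x o' (List.mem_append_left _ hx)).trans (hw _ _ (List.mem_of_getElem? hj))
        · exact dfOK_iff_forall_mem.1 hdf x o' hx _ _ hj
      · exact (hLR x o' (List.mem_append_right _ hx)).trans (hw _ _ (List.mem_of_getElem? hj))
    refine DFSeq.step (hcount u hu) hp hj' hdf' ?_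
    rw [applyProdA_append_append _ _ _ _ _ hjlt]
    refine ih (fun x o' hx => ?_) (hb.trans m.le_succ)
    rcases mem_applyProdA hx with hx | rfl
    · exact hw x o' hx
    · exact hb.trans m.le_succ

end DFSeq

theorem KSeq.exists_dfSeq {k : ℕ∞} {u v : Word N T} {l} (h : KSeq G k u l v)
    (hv : ntCount v = 0) {m c : ℕ} {ua : AWord N T} (hua : strip ua = u)
    (hage : ∀ x o, (Sum.inl x, o) ∈ ua → o = c) (hcm : c ≤ m) :
    ∃ l' va, DFSeq G k m ua l' va ∧ strip va = v := by
  induction hn : l.length using Nat.strong_induction_on generalizing k u l v m c ua with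
  | _ n ih =>
  subst hn
  by_cases hu : ntCount u = 0
  · obtain rfl := h.eq_of_ntCount_eq_zero hu
    exact ⟨[], ua, DFSeq.refl _ _ (by rw [ntCountA_eq_ntCount_strip, hua]; exact h.ntCount_le),
      hua⟩
  obtain ⟨A, Y, B, l₁, w, l₂, rfl, hw, h₁, h₂, hlen⟩ := h.exists_first_finished_nonterminal hv hu
  have hk_part : 1 ≤ k - (ntCount (A ++ Sum.inl Y :: B) - 1 : ℕ) := by
    simpa [ntCount, List.filter_cons] using h₁.ntCount_le
  obtain ⟨p, l₁, rfl, hp, rfl, h₁⟩ := h₁.exists_cons_of_singleton hw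
  obtain ⟨L, R, rfl, rfl, rfl⟩ := exists_eq_append_cons_of_strip_eq hua hage
  have hage_ctx : ∀ x o, (Sum.inl x, o) ∈ L ++ R → o ≤ c := fun x o hx =>
    (hage x o (by simp only [List.mem_append, List.mem_cons] at hx ⊢; tauto)).le
  have hctx_count : ntCountA (L ++ R) = ntCount (strip L ++ Sum.inl p.1 :: strip R) - 1 := by
    rw [ntCountA_eq_ntCount_strip, strip_append, ntCount_append, ntCount_append, ntCount_cons,
      show ntCount [(Sum.inl p.1 : N ⊕ T)] = 1 from rfl]
    omega
  obtain ⟨l₁', wa, hdf₁, hwa⟩ := ih l₁.length (by simp only [List.length_cons] at hlen; omega)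
    h₁ hw (ua := p.2.map fun s => (s, m + 1)) (by simp [strip, Function.comp_def])
    (fun x o hx => by obtain ⟨_, _, he⟩ := List.mem_map.1 hx; exact (Prod.ext_iff.1 he).2.symm)
    le_rfl rfl
  have hframed := (DFSeq.cons_singleton (c := c) hp hk_part hdf₁).frame (k := k) L R
    (by rw [hctx_count]; exact (tsub_add_cancel_of_le
      ((Nat.cast_le.2 (Nat.sub_le _ _)).trans h.ntCount_le)).le)
    hage_ctx (fun x o hx => by simp only [List.mem_singleton, Prod.mk.injEq] at hx; omega) hcm
  rw [List.append_assoc, List.singleton_append] at hframed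
  have hage_rest : ∀ x o, (Sum.inl x, o) ∈ L ++ wa ++ R → o = c := by
    intro x o hx
    rcases List.mem_append.1 hx with hx | hx
    · rcases List.mem_append.1 hx with hx | hx
      · exact hage x o (List.mem_append_left _ hx)
      · exact absurd (List.mem_map_of_mem (f := Prod.fst) hx)
          (ntCount_eq_zero_iff.1 (show ntCount (strip wa) = 0 by rw [hwa]; exact hw) x)
    · exact hage x o (List.mem_append_right _ (List.mem_cons_of_mem _ hx))
  obtain ⟨l₂', va, hdf₂, hva⟩ := ih l₂.length (by simp only [List.length_cons] at hlen; omega)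
    h₂ hv (by rw [strip_append, strip_append, hwa]) hage_rest (hcm.trans (Nat.le_add_right _ _)) rfl
  exact ⟨_, va, hframed.append hdf₂, hva⟩

theorem kIndex_iff_kIndex_depthFirst_general {N T : Type} (G : CFG N T) (X : N) (k : ℕ)
    (w : List T) :
    (∃ γ : List (CProd N T), CtrlSeq G (k : ℕ∞) [Sum.inl X] γ (tw w)) ↔
    (∃ γ : List (CProd N T), DFCtrlFrom G (k : ℕ∞) [Sum.inl X] γ (tw w)) := by
  constructor
  · rintro ⟨γ, js, -, h⟩
    obtain ⟨l, va, hdf, hva⟩ := h.exists_dfSeq (ntCount_tw w) (strip_annot _) (c := 0)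
      (fun x o hx => by simp [annot] at hx; exact hx.2) le_rfl
    exact ⟨l.map Prod.fst, l.map Prod.snd, va, by simp, by rwa [← List.zip_of_prod rfl rfl], hva⟩
  · rintro ⟨γ, js, va, hlen, hdf, hva⟩
    exact ⟨γ, js, hlen, by simpa [strip_annot, hva] using hdf.toKSeq⟩

/-- Theorem 1, first item; Luker: for every grammar `G`, nonterminal `X`,
`k > 0` and terminal word `w`, there is a `k`-index step sequence deriving `w` from `X`
iff there is a `k`-index depth-first step sequence deriving `w` from `X`. -/
theorem kIndex_iff_kIndex_depthFirst {N T : Type} (G : CFG N T) (X : N) (k : ℕ) (hk : 0 < k)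
    (w : List T) :
    (∃ γ : List (CProd N T), CtrlSeq G (k : ℕ∞) [Sum.inl X] γ (tw w)) ↔
    (∃ γ : List (CProd N T), DFCtrlFrom G (k : ℕ∞) [Sum.inl X] γ (tw w)) :=
  kIndex_iff_kIndex_depthFirst_general G X k w

end Paper
end

section
/- Let G = (Ξ, Σ, Δ) be a grammar all of whose productions (X, w) satisfy |w↓Σ| ≤ 2 and |w↓Ξ| ≤ 2, and let k > 0. For each X ∈ Ξ, Y ∈ Ξ ∪ {ε} and γ ∈ Δ*: γ ∈ Γ^{df(k)}_{X,Y}(G) if and only if the labeled graph A^{df(k)}_G contains a path from the vertex X^⟨0⟩ to the vertex Y^⟨0⟩ (to the empty ranked word when Y = ε) whose sequence of edge labels is γ. -/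
/-!
A vertex of `A^{df(k)}_G` records the nonterminal occurrences of a sentential form of a
depth-first step sequence, each ranked by a strictly monotone compression of the index of the
step at which it appeared (`Relabel`); their order is irrelevant, since an edge may rewrite any
occurrence of maximal rank. The depth-first rule rewrites an occurrence of maximal appearance
index, that is, of maximal rank, and the new occurrences get the current index, larger than all
others. The rank `newRank` assigned by an edge is exactly the compressed value of that index
once the rewritten occurrence is removed: it exceeds every surviving rank, and the ranks stay
contiguous. So step sequences and labelled paths simulate each other step by step.
-/

namespace Paper

variable {N T : Type}

lemma _root_.List.perm_toList_iff {α : Type} {l : List α} {a : Option α} :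
    l.Perm a.toList ↔ l = a.toList := by
  cases a <;> simp

lemma _root_.StrictMonoOn.update_insert {α β : Type} [LinearOrder α] [Preorder β] {f : α → β}
    {s : Set α} {a : α} {b : β} (hf : StrictMonoOn f s) (ha : ∀ x ∈ s, x < a)
    (hb : ∀ x ∈ s, f x < b) : StrictMonoOn (Function.update f a b) (insert a s) := by
  have heq : Set.EqOn f (Function.update f a b) s :=
    fun x hx => (Function.update_of_ne (ha x hx).ne _ _).symm
  rw [strictMonoOn_insert_iff_of_forall_le fun x hx => (ha x hx).le]
  refine ⟨fun x hx _ => ?_, hf.congr heq⟩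
  rw [← heq hx, Function.update_self]
  exact hb x hx

section Occurrences

def ntOccs (w : AWord N T) : RW N :=
  w.filterMap fun s => s.1.getLeft?.map (·, s.2)

@[simp]
lemma mem_ntOccs {w : AWord N T} {x : N} {a : ℕ} :
    (x, a) ∈ ntOccs w ↔ (Sum.inl x, a) ∈ w := by
  simp [ntOccs, List.mem_filterMap, Sum.getLeft?_eq_some_iff]

lemma ntOccs_append (u v : AWord N T) : ntOccs (u ++ v) = ntOccs u ++ ntOccs v :=
  List.filterMap_append

lemma ntOccs_map_pair (l : Word N T) (m : ℕ) :
    ntOccs (l.map (·, m)) = (ntProj l).map (·, m) := by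
  induction l with
  | nil => rfl
  | cons s l ih => cases s <;> simp_all [ntOccs, ntProj, List.filterMap_cons]

lemma ntCountA_eq_length_ntOccs (w : AWord N T) : ntCountA w = (ntOccs w).length := by
  induction w with
  | nil => rfl
  | cons s w ih =>
    rcases s with ⟨_ | _, _⟩ <;>
      simp_all [ntCountA, ntOccs, List.filter_cons, List.filterMap_cons]

lemma ntProj_strip (w : AWord N T) : ntProj (strip w) = (ntOccs w).map Prod.fst := by
  induction w with
  | nil => rfl
  | cons s w ih =>
    rcases s with ⟨_ | _, _⟩ <;> simp_all [ntProj, strip, ntOccs, List.filterMap_cons]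

lemma ntOccs_applyProdA {w : AWord N T} {j o : ℕ} {X : N} (p : CProd N T) (m : ℕ)
    (h : w[j]? = some (Sum.inl X, o)) :
    ∃ A B, ntOccs w = A ++ (X, o) :: B ∧
      ntOccs (applyProdA p j m w) = A ++ (ntProj p.2).map (·, m) ++ B := by
  obtain ⟨hj, hwj⟩ := List.getElem?_eq_some_iff.1 h
  refine ⟨ntOccs (w.take j), ntOccs (w.drop (j + 1)), ?_, ?_⟩
  · conv_lhs => rw [← List.take_append_drop j w, List.drop_eq_getElem_cons hj, hwj]
    simp [ntOccs]
  · simp [applyProdA, ntOccs_append, ntOccs_map_pair]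

lemma dfOK_iff {w : AWord N T} {j o : ℕ} {s : N ⊕ T} (h : w[j]? = some (s, o)) :
    dfOK w j ↔ ∀ t ∈ ntOccs w, t.2 ≤ o := by
  refine ⟨fun hdf t ht => ?_, fun hmax i x a hi s' oj hj => ?_⟩
  · obtain ⟨i, hi⟩ := List.mem_iff_getElem?.1 (mem_ntOccs.1 ht)
    exact hdf i t.1 t.2 hi s o h
  · obtain ⟨-, rfl⟩ := Prod.mk.inj (Option.some.inj (h.symm.trans hj))
    exact hmax (x, a) (mem_ntOccs.2 (List.mem_of_getElem? hi))

lemma annot_le_applyProdA {w : AWord N T} {m : ℕ} (p : CProd N T) (j : ℕ)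
    (h : ∀ s ∈ w, s.2 ≤ m) : ∀ s ∈ applyProdA p j (m + 1) w, s.2 ≤ m + 1 := by
  intro s hs
  simp only [applyProdA, List.mem_append, List.mem_map] at hs
  rcases hs with (hs | ⟨_, _, rfl⟩) | hs
  · exact (h s (List.mem_of_mem_take hs)).trans m.le_succ
  · exact le_rfl
  · exact (h s (List.mem_of_mem_drop hs)).trans m.le_succ

lemma ntProj_eq_toList_iff {w : Word N T} {Y : Option N} :
    ntProj w = Y.toList ↔ ∃ u v, w = sent u Y v := by
  refine ⟨fun h => ?_, ?_⟩
  · induction w generalizing Y with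
    | nil => exact ⟨[], [], by cases Y <;> simp_all [ntProj, sent, tw]⟩
    | cons s w ih =>
      rcases s with x | t
      · obtain ⟨rfl, hw⟩ : Y = some x ∧ ntProj w = [] := by
          cases Y <;> simp_all [ntProj]
        obtain ⟨u, v, rfl⟩ := ih (Y := none) hw
        exact ⟨[], u ++ v, by simp [sent, tw]⟩
      · obtain ⟨u, v, rfl⟩ := ih (by simpa [ntProj, List.filterMap_cons] using h)
        exact ⟨t :: u, v, by simp [sent, tw]⟩
  · rintro ⟨u, v, rfl⟩
    cases Y <;> simp [ntProj, sent, tw, List.filterMap_append, Function.comp_def]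

end Occurrences

section Vertices

lemma lt_newRank {uv : RW N} {i : ℕ} (h : ∀ p ∈ uv, p.2 ≤ i) {p : N × ℕ} (hp : p ∈ uv) :
    p.2 < newRank uv i := by
  unfold newRank
  split_ifs with h0 h1
  · simp [h0] at hp
  · exact (h p hp).lt_of_ne (h1 p hp)
  · exact Nat.lt_succ_of_le (h p hp)

lemma exists_rank_of_lt_newRank {uv : RW N} {i j : ℕ} (h : ∀ j < i, ∃ x, (x, j) ∈ uv)
    (hj : j < newRank uv i) : ∃ x, (x, j) ∈ uv := by
  unfold newRank at hj
  split_ifs at hj with h0 h1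
  · omega
  · exact h j hj
  · rcases (Nat.lt_succ_iff.1 hj).lt_or_eq with hj | rfl
    · exact h j hj
    · push Not at h1
      obtain ⟨p, hp, rfl⟩ := h1
      exact ⟨p.1, hp⟩

lemma contiguousRanks_of_bounds {q : RW N} {r : ℕ} (hlt : ∀ j < r, ∃ x, (x, j) ∈ q)
    (hle : ∀ p ∈ q, p.2 ≤ r) : contiguousRanks q := by
  intro p hp j hj
  rcases (hj.trans (hle p hp)).lt_or_eq with hjr | rfl
  · exact hlt j hjr
  · exact ⟨p.1, (le_antisymm hj (hle p hp)) ▸ hp⟩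

lemma IsVertex.rewrite {k : ℕ} {u v : RW N} {X : N} {i : ℕ} (l : List N)
    (hq : IsVertex k (u ++ (X, i) :: v)) (hmax : ∀ p ∈ u ++ (X, i) :: v, p.2 ≤ i)
    (hlen : (u ++ v ++ l.map (·, newRank (u ++ v) i)).length ≤ k) :
    IsVertex k (u ++ v ++ l.map (·, newRank (u ++ v) i)) := by
  obtain ⟨-, hcont, hsort⟩ := hq
  set r := newRank (u ++ v) i
  have hsub : (u ++ v).Sublist (u ++ (X, i) :: v) :=
    (List.sublist_cons_self _ _).append_left u
  have hle : ∀ p ∈ u ++ v, p.2 ≤ i := fun p hp => hmax p (hsub.subset hp)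
  have hlt : ∀ j < i, ∃ x, (x, j) ∈ u ++ v := by
    intro j hj
    obtain ⟨x, hx⟩ := hcont (X, i) (by simp) j hj.le
    refine ⟨x, ?_⟩
    simp only [List.mem_append, List.mem_cons, Prod.mk.injEq] at hx ⊢
    rcases hx with hx | ⟨-, rfl⟩ | hx
    exacts [Or.inl hx, absurd hj (lt_irrefl j), Or.inr hx]
  have hnew : ∀ p ∈ l.map (·, r), p.2 = r := by simp
  refine ⟨hlen, contiguousRanks_of_bounds (r := r) ?_ ?_, ?_⟩
  · intro j hj
    obtain ⟨x, hx⟩ := exists_rank_of_lt_newRank hlt hj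
    exact ⟨x, List.mem_append_left _ hx⟩
  · intro p hp
    rcases List.mem_append.1 hp with hp | hp
    · exact (lt_newRank hle hp).le
    · exact (hnew p hp).le
  · rw [List.map_append, List.pairwise_append]
    refine ⟨hsort.sublist (hsub.map _), ?_, ?_⟩
    · simpa [List.pairwise_map] using List.pairwise_of_forall (fun _ _ => trivial)
    · intro a ha b hb
      obtain ⟨p, hp, rfl⟩ := List.mem_map.1 ha
      obtain ⟨q, hq, rfl⟩ := List.mem_map.1 hb
      rw [hnew q hq]
      exact (lt_newRank hle hp).le

lemma isVertex_singleton {k : ℕ} (hk : 0 < k) (X : N) : IsVertex k [(X, 0)] :=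
  ⟨by simp; omega, fun p hp j hj => ⟨X, by simp_all⟩, by simp⟩

lemma IsVertex.eq_map_zero {k : ℕ} {q : RW N} {Y : Option N} (hq : IsVertex k q)
    (h : q.map Prod.fst = Y.toList) : q = Y.toList.map (·, 0) := by
  cases Y with
  | none => simpa using h
  | some y =>
    obtain ⟨⟨x, r⟩, rfl, rfl⟩ := List.map_eq_singleton_iff.1 h
    obtain ⟨z, hz⟩ := hq.2.1 (x, r) (by simp) 0 (Nat.zero_le r)
    simp_all

end Vertices

section Relabel

def Relabel (s q : RW N) : Prop :=
  ∃ f : ℕ → ℕ, StrictMonoOn f {a | ∃ x, (x, a) ∈ s} ∧ (s.map (Prod.map id f)).Perm q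

lemma Relabel.refl (s : RW N) : Relabel s s :=
  ⟨id, strictMonoOn_id, by simp⟩

lemma Relabel.length_eq {s q : RW N} (h : Relabel s q) : s.length = q.length := by
  obtain ⟨f, -, hperm⟩ := h
  simpa using hperm.length_eq

lemma Relabel.map_fst_perm {s q : RW N} (h : Relabel s q) :
    (s.map Prod.fst).Perm (q.map Prod.fst) := by
  obtain ⟨f, -, hperm⟩ := h
  simpa [List.map_map, Function.comp_def] using hperm.map Prod.fst

lemma relabel_rewrite {A B u v : RW N} {X : N} {o m : ℕ} {f : ℕ → ℕ} (l : List N)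
    (hf : StrictMonoOn f {a | ∃ x, (x, a) ∈ A ++ (X, o) :: B})
    (hperm : ((A ++ (X, o) :: B).map (Prod.map id f)).Perm (u ++ (X, f o) :: v))
    (hmax : ∀ t ∈ A ++ (X, o) :: B, t.2 ≤ o) (hfresh : ∀ t ∈ A ++ (X, o) :: B, t.2 < m) :
    Relabel (A ++ l.map (·, m) ++ B) (u ++ v ++ l.map (·, newRank (u ++ v) (f o))) := by
  set r := newRank (u ++ v) (f o)
  set g : N × ℕ → N × ℕ := Prod.map id f
  have hsub : ∀ t ∈ A ++ B, t ∈ A ++ (X, o) :: B := by simp; tauto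
  replace hmax t (ht : t ∈ A ++ B) := hmax t (hsub t ht)
  replace hfresh t (ht : t ∈ A ++ B) := hfresh t (hsub t ht)
  have hcancel : ((A ++ B).map g).Perm (u ++ v) := by
    rw [List.map_append, List.map_cons] at hperm
    rw [List.map_append]
    exact (List.perm_middle.symm.trans (hperm.trans List.perm_middle)).cons_inv
  have hlt : ∀ t ∈ A ++ B, f t.2 < r := by
    have hub : ∀ p ∈ u ++ v, p.2 ≤ f o := by
      intro p hp
      obtain ⟨t, ht, rfl⟩ := List.mem_map.1 (hcancel.mem_iff.2 hp)
      exact hf.monotoneOn ⟨t.1, hsub t ht⟩ ⟨X, by simp⟩ (hmax t ht)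
    exact fun t ht => lt_newRank hub (hcancel.mem_iff.1 (List.mem_map_of_mem ht))
  have hupd : ∀ t ∈ A ++ B, Function.update f m r t.2 = f t.2 :=
    fun t ht => Function.update_of_ne (hfresh t ht).ne _ _
  refine ⟨Function.update f m r, ?_, ?_⟩
  · have hdom : {a | ∃ x, (x, a) ∈ A ++ l.map (·, m) ++ B} ⊆
        insert m {a | ∃ x, (x, a) ∈ A ++ B} := by
      rintro a ⟨x, hx⟩
      simp only [List.mem_append, List.mem_map, Prod.mk.injEq] at hx
      rcases hx with (hx | ⟨_, _, -, rfl⟩) | hx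
      exacts [Or.inr ⟨x, List.mem_append_left _ hx⟩, Or.inl rfl,
        Or.inr ⟨x, List.mem_append_right _ hx⟩]
    refine (hf.mono ?_ |>.update_insert ?_ ?_).mono hdom
    · rintro a ⟨x, hx⟩
      exact ⟨x, hsub _ hx⟩
    · rintro a ⟨x, hx⟩
      exact hfresh _ hx
    · rintro a ⟨x, hx⟩
      exact hlt _ hx
  · have hold : ∀ C : RW N, (∀ t ∈ C, t ∈ A ++ B) →
        C.map (Prod.map id (Function.update f m r)) = C.map g := by
      intro C hC
      exact List.map_congr_left fun t ht => Prod.ext rfl (hupd t (hC t ht))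
    rw [List.map_append, List.map_append, hold A (fun t ht => List.mem_append_left _ ht),
      hold B (fun t ht => List.mem_append_right _ ht), List.map_map]
    have hnew : (l.map ((Prod.map id (Function.update f m r)) ∘ (·, m))) = l.map (·, r) := by
      simp [Function.comp_def]
    rw [hnew, List.append_assoc]
    refine (List.perm_append_comm.append_left _).trans ?_
    rw [← List.append_assoc, ← List.map_append]
    exact hcancel.append_right _

end Relabel

section Simulation

variable {G : CFG N T} {k : ℕ}

lemma relabel_applyProdA {w : AWord N T} {u v : RW N} {p : CProd N T} {j o m : ℕ}
    {f : ℕ → ℕ} (hf : StrictMonoOn f {a | ∃ x, (x, a) ∈ ntOccs w})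
    (hperm : ((ntOccs w).map (Prod.map id f)).Perm (u ++ (p.1, f o) :: v))
    (hget : w[j]? = some (Sum.inl p.1, o)) (hmax : ∀ t ∈ ntOccs w, t.2 ≤ o)
    (hbnd : ∀ s ∈ w, s.2 ≤ m) :
    Relabel (ntOccs (applyProdA p j (m + 1) w))
      (u ++ v ++ (ntProj p.2).map (·, newRank (u ++ v) (f o))) := by
  have hfresh : ∀ t ∈ ntOccs w, t.2 < m + 1 :=
    fun t ht => Nat.lt_succ_of_le (hbnd _ (mem_ntOccs.1 ht))
  obtain ⟨A, B, hw, hw'⟩ := ntOccs_applyProdA p (m + 1) hget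
  rw [hw] at hf hperm hmax hfresh
  rw [hw']
  exact relabel_rewrite _ hf hperm hmax hfresh

lemma exists_edge_of_dfStep {w : AWord N T} {q : RW N} {p : CProd N T} {j o m : ℕ}
    (hsim : Relabel (ntOccs w) q) (hq : IsVertex k q) (hp : p ∈ G.prods)
    (hget : w[j]? = some (Sum.inl p.1, o)) (hdf : dfOK w j) (hbnd : ∀ s ∈ w, s.2 ≤ m)
    (hcnt : ntCountA (applyProdA p j (m + 1) w) ≤ k) :
    ∃ q', Edge G k q p q' ∧ Relabel (ntOccs (applyProdA p j (m + 1) w)) q' := by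
  obtain ⟨f, hf, hperm⟩ := hsim
  have hmax := (dfOK_iff hget).1 hdf
  have hmem : (p.1, o) ∈ ntOccs w := mem_ntOccs.2 (List.mem_of_getElem? hget)
  obtain ⟨u, v, rfl⟩ :=
    List.append_of_mem (hperm.subset (List.mem_map_of_mem (f := Prod.map id f) hmem))
  have hqmax : ∀ x ∈ u ++ (p.1, f o) :: v, x.2 ≤ f o := by
    intro x hx
    obtain ⟨t, ht, rfl⟩ := List.mem_map.1 (hperm.mem_iff.2 hx)
    exact hf.monotoneOn ⟨t.1, ht⟩ ⟨p.1, hmem⟩ (hmax t ht)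
  have hsim' := relabel_applyProdA hf hperm hget hmax hbnd
  have hlen : (u ++ v ++ (ntProj p.2).map (·, newRank (u ++ v) (f o))).length ≤ k := by
    rwa [← hsim'.length_eq, ← ntCountA_eq_length_ntOccs]
  exact ⟨_, ⟨hp, hq, hq.rewrite _ hqmax hlen, u, v, f o, by simp, hqmax, rfl⟩, hsim'⟩

lemma exists_dfStep_of_edge {w : AWord N T} {q q' : RW N} {p : CProd N T} {m : ℕ}
    (hsim : Relabel (ntOccs w) q) (he : Edge G k q p q') (hbnd : ∀ s ∈ w, s.2 ≤ m) :
    ∃ j o, w[j]? = some (Sum.inl p.1, o) ∧ dfOK w j ∧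
      Relabel (ntOccs (applyProdA p j (m + 1) w)) q' := by
  obtain ⟨-, -, -, u, v, i, rfl, hqmax, rfl⟩ := he
  obtain ⟨f, hf, hperm⟩ := hsim
  rw [List.append_assoc, List.singleton_append] at hperm hqmax
  obtain ⟨⟨x, o⟩, hmem, hxo⟩ :=
    List.mem_map.1 (hperm.mem_iff.2 (show (p.1, i) ∈ u ++ (p.1, i) :: v by simp))
  simp only [Prod.map_apply, id, Prod.mk.injEq] at hxo
  obtain ⟨rfl, rfl⟩ := hxo
  obtain ⟨j, hget⟩ := List.mem_iff_getElem?.1 (mem_ntOccs.1 hmem)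
  have hmax : ∀ t ∈ ntOccs w, t.2 ≤ o := fun t ht =>
    (hf.le_iff_le ⟨t.1, ht⟩ ⟨p.1, hmem⟩).1 (hqmax _ (hperm.subset (List.mem_map_of_mem ht)))
  exact ⟨j, o, hget, (dfOK_iff hget).2 hmax, relabel_applyProdA hf hperm hget hmax hbnd⟩

lemma Relabel.ntCountA_le {w : AWord N T} {q : RW N} (hsim : Relabel (ntOccs w) q)
    (hq : q.length ≤ k) : (ntCountA w : ℕ∞) ≤ k := by
  rw [ntCountA_eq_length_ntOccs, hsim.length_eq]
  exact_mod_cast hq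

lemma DFSeq.ntCountA_le {m : ℕ} {w va : AWord N T} {γjs : List (CProd N T × ℕ)}
    (h : DFSeq G k m w γjs va) : ntCountA w ≤ k := by
  cases h <;> exact_mod_cast ‹(ntCountA w : ℕ∞) ≤ k›

lemma DFSeq.exists_gPath {m : ℕ} {w va : AWord N T} {γjs : List (CProd N T × ℕ)}
    (h : DFSeq G k m w γjs va) {q : RW N} (hsim : Relabel (ntOccs w) q) (hq : IsVertex k q)
    (hbnd : ∀ s ∈ w, s.2 ≤ m) :
    ∃ q', GPath (Edge G k) q (γjs.map Prod.fst) q' ∧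
      Relabel (ntOccs va) q' ∧ IsVertex k q' := by
  induction h generalizing q with
  | refl => exact ⟨q, .refl q, hsim, hq⟩
  | step _ hp hget hdf hrest ih =>
    obtain ⟨q', he, hsim'⟩ :=
      exists_edge_of_dfStep hsim hq hp hget hdf hbnd hrest.ntCountA_le
    obtain ⟨qf, hpath, hsimf, hqf⟩ := ih hsim' he.2.2.1 (annot_le_applyProdA _ _ hbnd)
    exact ⟨qf, .step he hpath, hsimf, hqf⟩

lemma GPath.exists_dfSeq {q qf : RW N} {γ : List (CProd N T)} (h : GPath (Edge G k) q γ qf)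
    {m : ℕ} {w : AWord N T} (hsim : Relabel (ntOccs w) q) (hq : q.length ≤ k)
    (hbnd : ∀ s ∈ w, s.2 ≤ m) :
    ∃ γjs va, γjs.map Prod.fst = γ ∧ DFSeq G k m w γjs va ∧ Relabel (ntOccs va) qf := by
  induction h generalizing m w with
  | refl => exact ⟨[], w, rfl, .refl m w (hsim.ntCountA_le hq), hsim⟩
  | step he _ ih =>
    obtain ⟨j, o, hget, hdf, hsim'⟩ := exists_dfStep_of_edge hsim he hbnd
    obtain ⟨γjs, va, rfl, hseq, hsimf⟩ :=
      ih hsim' he.2.2.1.1 (annot_le_applyProdA _ _ hbnd)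
    exact ⟨(_, j) :: γjs, va, rfl, .step (hsim.ntCountA_le hq) he.1 hget hdf hseq, hsimf⟩

end Simulation

theorem gammaDF_iff_path_general {N T : Type} (G : CFG N T)
    (k : ℕ) (hk : 0 < k) (X : N) (Y : Option N) (γ : List (CProd N T)) :
    γ ∈ GammaDF G k X Y ↔
      GPath (Edge G k) [(X, 0)] γ (Y.elim ([] : RW N) (fun y => [(y, 0)])) := by
  have hstart : Relabel (ntOccs (annot ([Sum.inl X] : Word N T))) [(X, 0)] := Relabel.refl _
  have hbnd : ∀ s ∈ annot ([Sum.inl X] : Word N T), s.2 ≤ 0 := by simp [annot]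
  have htarget : Y.elim ([] : RW N) (fun y => [(y, 0)]) = Y.toList.map (·, 0) := by
    cases Y <;> rfl
  rw [htarget]
  constructor
  · rintro ⟨u, v, js, va, hlen, hseq, hva⟩
    obtain ⟨q, hpath, hsim, hq⟩ := hseq.exists_gPath hstart (isVertex_singleton hk X) hbnd
    have hY : (ntOccs va).map Prod.fst = Y.toList := by
      rw [← ntProj_strip, hva]
      exact ntProj_eq_toList_iff.2 ⟨u, v, rfl⟩
    rw [List.map_fst_zip hlen.ge] at hpath
    rwa [← hq.eq_map_zero (List.perm_toList_iff.1 (hY ▸ hsim.map_fst_perm).symm)]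
  · intro hpath
    obtain ⟨γjs, va, rfl, hseq, hsim⟩ := hpath.exists_dfSeq hstart (by simp; omega) hbnd
    have hY : ntProj (strip va) = Y.toList := by
      rw [ntProj_strip, ← List.perm_toList_iff]
      simpa [List.map_map, Function.comp_def] using hsim.map_fst_perm
    obtain ⟨u, v, hva⟩ := ntProj_eq_toList_iff.1 hY
    exact ⟨u, v, γjs.map Prod.snd, va, by simp,
      by rwa [← List.unzip_fst, ← List.unzip_snd, List.zip_unzip], hva⟩

/-- Lemma 1, first part: for a grammar whose productions have at most
two terminals and two nonterminals on their right-hand sides, and `k > 0`: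
`γ ∈ Γ^{df(k)}_{X,Y}(G)` iff the graph `A^{df(k)}_G` has a path from `X^⟨0⟩` to `Y^⟨0⟩`
(to the empty ranked word when `Y = ε`) labeled by `γ`. -/
theorem gammaDF_iff_path {N T : Type} (G : CFG N T)
    (hG : ∀ p ∈ G.prods, tCount p.2 ≤ 2 ∧ ntCount p.2 ≤ 2)
    (k : ℕ) (hk : 0 < k) (X : N) (Y : Option N) (γ : List (CProd N T)) :
    γ ∈ GammaDF G k X Y ↔
      GPath (Edge G k) [(X, 0)] γ (Y.elim ([] : RW N) (fun y => [(y, 0)])) :=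
  gammaDF_iff_path_general G k hk X Y γ

end Paper
end
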